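/- arXiv:1309.7130 — 2 statements merged into one kernel-verified Lean document; each statement's English description precedes it below -/
import Mathlib

section
/- There exists a continuous function ω : ℝ → [0,1] with logarithmic integral 𝓛(ω) = ∫_ℝ log ω(x)/(1+x²) dx > −∞ which is not a Beurling–Malliavin majorant; in fact, for every σ > 0, the only entire function F with |F(z)| ≤ C_F e^{σ|z|} for all z ∈ ℂ, F|_ℝ ∈ L²(ℝ) and |F(x)| ≤ ω(x) for all x ∈ ℝ is F ≡ 0. Such an ω can be obtained by taking ω(t) = 2|t − √n|/|I_n| on pairwise disjoint intervals I_n centered at √n with Σ_n |I_n| < ∞, and ω(t) = 1 elsewhere. -/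
open MeasureTheory Filter Topology Complex Set

/-!
An entire function of exponential type cannot vanish at all the points `√n`: its zeros would be
`~ r²` in number inside `|z| < r`, whereas exponential type allows only `O(r)`. Concretely, dividing
`F` by `∏_{n<N} (z - √n)` and applying the maximum principle on `|z| = N` gives
`|F z| ≤ C (4 e^σ / √N)^N → 0`. So any majorant vanishing at every `√n` kills all such `F`.
Taking `ω` V-shaped on tiny intervals around `√n` and `1` elsewhere, `log ω` integrates to
`-|Iₙ|` over `Iₙ`, so `Σ |Iₙ| < ∞` makes the logarithmic integral finite.
-/

namespace Differentiable

variable {F : ℂ → ℂ}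

theorem exists_eq_sub_mul (hF : Differentiable ℂ F) {c : ℂ} (hc : F c = 0) :
    ∃ G : ℂ → ℂ, Differentiable ℂ G ∧ ∀ z, F z = (z - c) * G z := by
  refine ⟨dslope F c,
    differentiableOn_univ.1 ((differentiableOn_dslope univ_mem).2 hF.differentiableOn),
    fun z => ?_⟩
  simpa [hc] using (sub_smul_dslope F c z).symm

theorem exists_eq_prod_sub_mul (hF : Differentiable ℂ F) {a : ℕ → ℂ}
    (ha : Function.Injective a) (hzero : ∀ n, F (a n) = 0) (N : ℕ) :
    ∃ G : ℂ → ℂ, Differentiable ℂ G ∧ ∀ z, F z = (∏ n ∈ Finset.range N, (z - a n)) * G z := by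
  induction N with
  | zero => exact ⟨F, hF, by simp⟩
  | succ N ih =>
    obtain ⟨G, hG, hFG⟩ := ih
    have hprod : ∏ n ∈ Finset.range N, (a N - a n) ≠ 0 :=
      Finset.prod_ne_zero_iff.2 fun n hn =>
        sub_ne_zero.2 (ha.ne (Finset.mem_range.1 hn).ne')
    have hGN : G (a N) = 0 := by
      simpa [hprod, hzero N] using (hFG (a N)).symm
    obtain ⟨H, hH, hGH⟩ := hG.exists_eq_sub_mul hGN
    exact ⟨H, hH, fun z => by rw [hFG, hGH, Finset.prod_range_succ, mul_assoc]⟩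

theorem norm_le_of_norm_eq_le (hF : Differentiable ℂ F) {R M : ℝ} (hR : 0 < R)
    (hM : ∀ w, ‖w‖ = R → ‖F w‖ ≤ M) {z : ℂ} (hz : ‖z‖ ≤ R) : ‖F z‖ ≤ M := by
  refine Complex.norm_le_of_forall_mem_frontier_norm_le (U := Metric.ball 0 R)
    Metric.isBounded_ball hF.diffContOnCl (fun w hw => hM w ?_) ?_
  · simpa [frontier_ball (0 : ℂ) hR.ne'] using hw
  · simpa [closure_ball (0 : ℂ) hR.ne'] using hz

/-- On `‖w‖ = N` each factor `‖w - aₙ‖`, `n < N`, is at least `N / 2`, while at `z` it is at most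
`2 √N`; the maximum principle for `F / ∏ (· - aₙ)` then produces the factor `(4 / √N) ^ N`. -/
theorem norm_le_pow_of_zeros_le_sqrt (hF : Differentiable ℂ F) {C σ : ℝ}
    (hC : ∀ z, ‖F z‖ ≤ C * Real.exp (σ * ‖z‖)) {a : ℕ → ℂ} (ha : Function.Injective a)
    (ha_le : ∀ n : ℕ, ‖a n‖ ≤ Real.sqrt (n + 1)) (hzero : ∀ n, F (a n) = 0) {N : ℕ}
    (hN : 2 ≤ Real.sqrt N) {z : ℂ} (hz : ‖z‖ ≤ Real.sqrt N) :
    ‖F z‖ ≤ C * (4 * Real.exp σ / Real.sqrt N) ^ N := by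
  obtain ⟨G, hG, hFG⟩ := hF.exists_eq_prod_sub_mul ha hzero N
  set s := Real.sqrt N
  have hs : s ≠ 0 := by positivity
  have hsN : (N : ℝ) = s ^ 2 := (Real.sq_sqrt N.cast_nonneg).symm
  have ha_s : ∀ n ∈ Finset.range N, ‖a n‖ ≤ s := fun n hn =>
    (ha_le n).trans (Real.sqrt_le_sqrt (by exact_mod_cast Finset.mem_range.1 hn))
  have hsphere : ∀ w, ‖w‖ = s ^ 2 → ‖G w‖ ≤ C * Real.exp σ ^ N / (s ^ 2 / 2) ^ N := by
    intro w hw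
    have hprod : (s ^ 2 / 2) ^ N ≤ ‖∏ n ∈ Finset.range N, (w - a n)‖ := by
      rw [norm_prod]
      calc (s ^ 2 / 2) ^ N = ∏ _n ∈ Finset.range N, s ^ 2 / 2 := by
            rw [Finset.prod_const, Finset.card_range]
        _ ≤ _ := Finset.prod_le_prod (fun _ _ => by positivity) fun n hn => by
          nlinarith [norm_sub_norm_le w (a n), ha_s n hn]
    have hFw := hC w
    rw [hw, ← hsN, mul_comm σ, Real.exp_nat_mul, hFG, norm_mul] at hFw
    rw [le_div_iff₀ (by positivity)]
    nlinarith [mul_le_mul_of_nonneg_left hprod (norm_nonneg (G w))]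
  have hGz := hG.norm_le_of_norm_eq_le (by positivity) hsphere (hz.trans (by nlinarith))
  have hprod : ‖∏ n ∈ Finset.range N, (z - a n)‖ ≤ (2 * s) ^ N := by
    rw [norm_prod]
    calc _ ≤ ∏ _n ∈ Finset.range N, 2 * s :=
          Finset.prod_le_prod (fun _ _ => norm_nonneg _) fun n hn => by
            linarith [norm_sub_le z (a n), ha_s n hn]
      _ = (2 * s) ^ N := by simp
  calc ‖F z‖ = ‖∏ n ∈ Finset.range N, (z - a n)‖ * ‖G z‖ := by rw [hFG, norm_mul]
    _ ≤ (2 * s) ^ N * (C * Real.exp σ ^ N / (s ^ 2 / 2) ^ N) :=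
      mul_le_mul hprod hGz (norm_nonneg _) (by positivity)
    _ = C * (4 * Real.exp σ / s) ^ N := by
      rw [div_pow, div_pow, mul_pow, mul_pow, ← pow_mul,
        show (4 : ℝ) ^ N = 2 ^ N * 2 ^ N by rw [← mul_pow]; norm_num]
      field_simp
      ring

theorem eq_zero_of_zeros_le_sqrt (hF : Differentiable ℂ F) {C σ : ℝ}
    (hC : ∀ z, ‖F z‖ ≤ C * Real.exp (σ * ‖z‖)) {a : ℕ → ℂ} (ha : Function.Injective a)
    (ha_le : ∀ n : ℕ, ‖a n‖ ≤ Real.sqrt (n + 1)) (hzero : ∀ n, F (a n) = 0) (z : ℂ) :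
    F z = 0 := by
  have hC0 : 0 ≤ C := nonneg_of_mul_nonneg_left ((norm_nonneg _).trans (hC 0)) (Real.exp_pos _)
  have hsqrt : Tendsto (fun N : ℕ => Real.sqrt N) atTop atTop :=
    Real.tendsto_sqrt_atTop.comp tendsto_natCast_atTop_atTop
  have hbound : ∀ᶠ N : ℕ in atTop, ‖F z‖ ≤ C * (1 / 2) ^ N := by
    filter_upwards [hsqrt.eventually_ge_atTop 2, hsqrt.eventually_ge_atTop ‖z‖,
      hsqrt.eventually_ge_atTop (8 * Real.exp σ)] with N h2 hz hσ
    refine (hF.norm_le_pow_of_zeros_le_sqrt hC ha ha_le hzero h2 hz).trans ?_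
    refine mul_le_mul_of_nonneg_left (pow_le_pow_left₀ (by positivity) ?_ N) hC0
    rw [div_le_iff₀ (by positivity)]
    linarith
  have hlim : Tendsto (fun N : ℕ => C * (1 / 2 : ℝ) ^ N) atTop (𝓝 0) := by
    simpa using (tendsto_pow_atTop_nhds_zero_of_lt_one (r := (1 / 2 : ℝ)) (by norm_num)
      (by norm_num)).const_mul C
  exact norm_le_zero_iff.1 (ge_of_tendsto hlim hbound)

end Differentiable

theorem abs_sub_div_le_one_of_mem_Icc {c r t : ℝ} (hr : 0 < r) (ht : t ∈ Icc (c - r) (c + r)) :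
    |t - c| / r ≤ 1 :=
  (div_le_one hr).2 (abs_sub_le_iff.2 ⟨by linarith [ht.2], by linarith [ht.1]⟩)

theorem min_one_abs_sub_div_eq_one_of_notMem {c r t : ℝ} (hr : 0 < r)
    (ht : t ∉ Icc (c - r) (c + r)) :
    min 1 (|t - c| / r) = 1 := by
  refine min_eq_left ((one_le_div hr).2 ?_)
  rw [mem_Icc, not_and_or, not_le, not_le] at ht
  rcases ht with ht | ht
  · exact le_abs.2 (Or.inr (by linarith))
  · exact le_abs.2 (Or.inl (by linarith))

theorem integral_log_abs_sub_div {c r : ℝ} (hr : 0 < r) :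
    ∫ x in c - r..c + r, Real.log (|x - c| / r) = -(2 * r) := by
  have hlog : ∀ x, Real.log (|x - c| / r) = Real.log (x / r - c / r) := fun x => by
    rw [← Real.log_abs (x / r - c / r), ← sub_div, abs_div, abs_of_pos hr]
  simp_rw [hlog]
  rw [intervalIntegral.integral_comp_div_sub (f := Real.log) hr.ne', integral_log, ← sub_div,
    ← sub_div, show c - r - c = -r by ring, show c + r - c = r by ring, neg_div, div_self hr.ne',
    Real.log_neg_eq_log, Real.log_one, smul_eq_mul]
  ring

theorem intervalIntegrable_log_abs_sub_div {c r : ℝ} (hr : 0 < r) :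
    IntervalIntegrable (fun x => Real.log (|x - c| / r)) volume (c - r) (c + r) :=
  -- the Bochner integral of a non-integrable function is `0`
  intervalIntegral.intervalIntegrable_of_integral_ne_zero <| by
    rw [integral_log_abs_sub_div hr]
    linarith

theorem integral_Icc_norm_log_abs_sub_div {c r : ℝ} (hr : 0 < r) :
    ∫ x in Icc (c - r) (c + r), ‖Real.log (|x - c| / r)‖ = 2 * r := by
  rw [setIntegral_congr_fun measurableSet_Icc (g := fun x => -Real.log (|x - c| / r))
      fun x hx => by
        rw [Real.norm_eq_abs, abs_of_nonpos (Real.log_nonpos (by positivity)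
          (abs_sub_div_le_one_of_mem_Icc hr hx))],
    integral_Icc_eq_integral_Ioc, ← intervalIntegral.integral_of_le (by linarith),
    intervalIntegral.integral_neg, integral_log_abs_sub_div hr, neg_neg]

theorem locallyFinite_Ici_of_tendsto {a : ℕ → ℝ} (ha : Tendsto a atTop atTop) :
    LocallyFinite fun n => Ici (a n) := by
  intro x
  obtain ⟨N, hN⟩ := (ha.eventually_gt_atTop (x + 1)).exists_forall_of_atTop
  refine ⟨Iio (x + 1), Iio_mem_nhds (lt_add_one x), (finite_lt_nat N).subset ?_⟩
  rintro n ⟨y, hy, hyx⟩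
  show n < N
  by_contra! hn
  linarith [hN n hn, mem_Ici.1 hy, mem_Iio.1 hyx]

theorem MeasureTheory.Integrable.div_one_add_sq {f : ℝ → ℝ} (hf : Integrable f) :
    Integrable fun x => f x / (1 + x ^ 2) := by
  refine hf.mono (hf.aestronglyMeasurable.div₀ (by fun_prop)) (ae_of_all _ fun x => ?_)
  rw [norm_div]
  refine div_le_self (norm_nonneg _) ?_
  rw [Real.norm_of_nonneg (by positivity)]
  nlinarith

/-- A locally finite product, so that continuity is `continuous_finprod`. -/
noncomputable def notchedMajorant (c r : ℕ → ℝ) (t : ℝ) : ℝ :=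
  ∏ᶠ n, min 1 (|t - c n| / r n)

section notchedMajorant

open Function

variable {c r : ℕ → ℝ}

theorem pairwise_disjoint_Icc_of_gap (hc : Monotone c) (hr : Antitone r)
    (hgap : ∀ n, c n + 2 * r n < c (n + 1)) :
    Pairwise (Disjoint on fun n => Icc (c n - r n) (c n + r n)) := by
  refine (pairwise_disjoint_on _).2 fun m n hmn => Set.disjoint_left.2 fun t htm htn => ?_
  linarith [htm.2, htn.1, hgap m, hc (Nat.succ_le_of_lt hmn), hr hmn.le]

theorem notchedMajorant_eq_of_mem (hr : ∀ n, 0 < r n)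
    (hdisj : Pairwise (Disjoint on fun n => Icc (c n - r n) (c n + r n))) {n : ℕ} {t : ℝ}
    (ht : t ∈ Icc (c n - r n) (c n + r n)) : notchedMajorant c r t = |t - c n| / r n := by
  rw [notchedMajorant, finprod_eq_single _ n fun m hm =>
    min_one_abs_sub_div_eq_one_of_notMem (hr m) fun htm => Set.disjoint_left.1 (hdisj hm) htm ht]
  exact min_eq_right (abs_sub_div_le_one_of_mem_Icc (hr n) ht)

theorem notchedMajorant_eq_one_of_notMem (hr : ∀ n, 0 < r n) {t : ℝ}
    (ht : t ∉ ⋃ n, Icc (c n - r n) (c n + r n)) : notchedMajorant c r t = 1 :=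
  finprod_eq_one_of_forall_eq_one fun n =>
    min_one_abs_sub_div_eq_one_of_notMem (hr n) fun htn => ht (mem_iUnion.2 ⟨n, htn⟩)

theorem notchedMajorant_mem_Icc (hr : ∀ n, 0 < r n)
    (hdisj : Pairwise (Disjoint on fun n => Icc (c n - r n) (c n + r n))) (t : ℝ) :
    notchedMajorant c r t ∈ Icc 0 1 := by
  by_cases ht : t ∈ ⋃ n, Icc (c n - r n) (c n + r n)
  · obtain ⟨n, hn⟩ := mem_iUnion.1 ht
    rw [notchedMajorant_eq_of_mem hr hdisj hn]
    exact ⟨div_nonneg (abs_nonneg _) (hr n).le, abs_sub_div_le_one_of_mem_Icc (hr n) hn⟩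
  · rw [notchedMajorant_eq_one_of_notMem hr ht]
    exact right_mem_Icc.2 zero_le_one

theorem continuous_notchedMajorant (hr : ∀ n, 0 < r n)
    (hc : Tendsto (fun n => c n - r n) atTop atTop) : Continuous (notchedMajorant c r) :=
  continuous_finprod (fun n => by fun_prop) <| (locallyFinite_Ici_of_tendsto hc).subset
    fun n t ht => by
      by_contra htn
      exact ht (min_one_abs_sub_div_eq_one_of_notMem (hr n) fun h => htn h.1)

theorem integrable_log_notchedMajorant (hr : ∀ n, 0 < r n)
    (hdisj : Pairwise (Disjoint on fun n => Icc (c n - r n) (c n + r n))) (hsum : Summable r) :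
    Integrable fun x => Real.log (notchedMajorant c r x) := by
  have hEq : ∀ n, EqOn (fun x => Real.log (|x - c n| / r n))
      (fun x => Real.log (notchedMajorant c r x)) (Icc (c n - r n) (c n + r n)) :=
    fun n x hx => by dsimp only; rw [notchedMajorant_eq_of_mem hr hdisj hx]
  refine IntegrableOn.integrable_of_forall_notMem_eq_zero
    (integrableOn_iUnion_of_summable_integral_norm (fun n => ?_) ?_)
    fun x hx => by rw [notchedMajorant_eq_one_of_notMem hr hx, Real.log_one]
  · exact ((intervalIntegrable_iff_integrableOn_Icc_of_le (by linarith [hr n])).1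
      (intervalIntegrable_log_abs_sub_div (hr n))).congr_fun (hEq n) measurableSet_Icc
  · refine (hsum.mul_left 2).congr fun n => ?_
    rw [← integral_Icc_norm_log_abs_sub_div (hr n)]
    exact setIntegral_congr_fun measurableSet_Icc fun x hx => congrArg norm (hEq n hx)

end notchedMajorant

noncomputable def notchLength (k : ℕ) : ℝ := (1 / 4) ^ k

theorem notchLength_pos (k : ℕ) : 0 < notchLength k := by
  unfold notchLength; positivity

theorem notchLength_le_one (k : ℕ) : notchLength k ≤ 1 :=
  pow_le_one₀ (by norm_num) (by norm_num)

theorem antitone_notchLength : Antitone notchLength := fun _ _ h =>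
  pow_le_pow_of_le_one (by norm_num) (by norm_num) h

theorem summable_notchLength : Summable notchLength :=
  summable_geometric_of_lt_one (by norm_num) (by norm_num)

theorem sqrt_add_notchLength_lt (n : ℕ) :
    Real.sqrt (n + 1) + notchLength (n + 1) < Real.sqrt (n + 1 + 1) := by
  set s := Real.sqrt (n + 1)
  set ε := notchLength (n + 1)
  have hs : s ^ 2 = n + 1 := Real.sq_sqrt (by positivity)
  have hs_le : s ≤ n + 1 := (Real.sqrt_le_left (by positivity)).2 (by nlinarith)
  have hε : ε ≤ 1 / 4 := pow_le_of_le_one (by norm_num) (by norm_num) n.succ_ne_zero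
  have hnε : (n + 1) * ε ≤ 1 / 4 := by
    have h4 : (n + 1 : ℝ) ≤ 4 ^ n := by exact_mod_cast Nat.lt_pow_self (by norm_num : 1 < 4)
    have hε_eq : ε = 1 / (4 ^ n * 4) := by simp only [ε, notchLength]; rw [one_div_pow, pow_succ]
    rw [hε_eq, mul_one_div, div_le_div_iff₀ (by positivity) (by norm_num)]
    linarith
  have hε0 : 0 < ε := notchLength_pos (n + 1)
  rw [Real.lt_sqrt (by positivity)]
  nlinarith [Real.sqrt_nonneg (n + 1)]

open Function in
theorem pairwise_disjoint_Icc_sqrt_notchLength :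
    Pairwise (Disjoint on fun n : ℕ => Icc (Real.sqrt (n + 1) - notchLength (n + 1) / 2)
      (Real.sqrt (n + 1) + notchLength (n + 1) / 2)) :=
  pairwise_disjoint_Icc_of_gap
    (fun m n h => Real.sqrt_le_sqrt (by exact_mod_cast Nat.succ_le_succ h))
    (fun m n h => by linarith [antitone_notchLength (Nat.succ_le_succ h)])
    (fun n => by push_cast; linarith [sqrt_add_notchLength_lt n])

theorem tendsto_sqrt_sub_notchLength :
    Tendsto (fun n : ℕ => Real.sqrt (n + 1) - notchLength (n + 1) / 2) atTop atTop := by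
  have hsqrt : Tendsto (fun n : ℕ => Real.sqrt (n + 1)) atTop atTop :=
    Real.tendsto_sqrt_atTop.comp (tendsto_atTop_add_const_right _ 1 tendsto_natCast_atTop_atTop)
  refine tendsto_atTop_mono (fun n => ?_) (tendsto_atTop_add_const_right _ (-1) hsqrt)
  linarith [notchLength_le_one (n + 1)]

theorem injective_ofReal_sqrt_succ : Function.Injective fun n : ℕ => (Real.sqrt (n + 1) : ℂ) :=
  fun m n h => by
    have := Complex.ofReal_injective h
    rwa [Real.sqrt_inj (by positivity) (by positivity), add_left_inj, Nat.cast_inj] at this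

/-- There exists a continuous `ω : ℝ → [0,1]` with finite logarithmic integral
`𝓛(ω) = ∫ log ω(x)/(1+x²) dx > -∞` which is not a Beurling–Malliavin majorant: for every
`σ > 0` the only entire function `F` with `|F(z)| ≤ C e^{σ|z|}`, `F|ℝ ∈ L²` and `|F| ≤ ω`
on `ℝ` is `F ≡ 0`.  Such an `ω` is obtained by taking `ω(t) = 2|t - √n|/|Iₙ|` on pairwise
disjoint intervals `Iₙ` centered at `√n` with `Σ |Iₙ| < ∞`, and `ω(t) = 1` elsewhere. -/
theorem exists_non_BM_majorant_with_finite_log_integral :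
    ∃ (ω : ℝ → ℝ) (ℓ : ℕ → ℝ),
      -- the construction: intervals `Iₙ` of length `ℓ n` centered at `√n`
      (∀ n : ℕ, 0 < ℓ (n + 1)) ∧
      (Pairwise fun m n : ℕ =>
        Disjoint (Set.Icc (Real.sqrt (m + 1) - ℓ (m + 1) / 2) (Real.sqrt (m + 1) + ℓ (m + 1) / 2))
          (Set.Icc (Real.sqrt (n + 1) - ℓ (n + 1) / 2) (Real.sqrt (n + 1) + ℓ (n + 1) / 2))) ∧
      Summable ℓ ∧
      (∀ n : ℕ, ∀ t ∈ Set.Icc (Real.sqrt (n + 1) - ℓ (n + 1) / 2)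
          (Real.sqrt (n + 1) + ℓ (n + 1) / 2),
        ω t = 2 * |t - Real.sqrt (n + 1)| / ℓ (n + 1)) ∧
      (∀ t : ℝ, t ∉ ⋃ n : ℕ, Set.Icc (Real.sqrt (n + 1) - ℓ (n + 1) / 2)
          (Real.sqrt (n + 1) + ℓ (n + 1) / 2) → ω t = 1) ∧
      -- the properties of `ω`
      Continuous ω ∧ (∀ t : ℝ, ω t ∈ Set.Icc (0 : ℝ) 1) ∧
      Integrable (fun x => Real.log (ω x) / (1 + x ^ 2)) ∧
      ∀ σ : ℝ, 0 < σ → ∀ F : ℂ → ℂ, Differentiable ℂ F →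
        (∃ C : ℝ, ∀ z : ℂ, ‖F z‖ ≤ C * Real.exp (σ * ‖z‖)) →
        MemLp (fun x : ℝ => F x) 2 volume →
        (∀ x : ℝ, ‖F (x : ℂ)‖ ≤ ω x) →
        ∀ z : ℂ, F z = 0 := by
  have hr : ∀ n : ℕ, 0 < notchLength (n + 1) / 2 := fun n => half_pos (notchLength_pos _)
  have hdisj := pairwise_disjoint_Icc_sqrt_notchLength
  have hval : ∀ n : ℕ, ∀ t ∈ Icc (Real.sqrt (n + 1) - notchLength (n + 1) / 2)
      (Real.sqrt (n + 1) + notchLength (n + 1) / 2),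
      notchedMajorant (fun n : ℕ => Real.sqrt (n + 1)) (fun n => notchLength (n + 1) / 2) t =
        2 * |t - Real.sqrt (n + 1)| / notchLength (n + 1) := fun n t ht => by
    rw [notchedMajorant_eq_of_mem hr hdisj ht, div_div_eq_mul_div, mul_comm]
  refine ⟨_, notchLength, fun n => notchLength_pos _, hdisj, summable_notchLength, hval,
    fun t ht => notchedMajorant_eq_one_of_notMem hr ht,
    continuous_notchedMajorant hr tendsto_sqrt_sub_notchLength, notchedMajorant_mem_Icc hr hdisj,
    (integrable_log_notchedMajorant hr hdisj
      ((summable_notchLength.comp_injective (add_left_injective 1)).div_const 2)).div_one_add_sq,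
    fun σ _ F hF ⟨C, hC⟩ _ hω => hF.eq_zero_of_zeros_le_sqrt hC injective_ofReal_sqrt_succ
      (fun n => by rw [Complex.norm_real, Real.norm_of_nonneg (Real.sqrt_nonneg _)])
      fun n => ?_⟩
  have hcenter := hval n (Real.sqrt (n + 1)) ⟨by linarith [hr n], by linarith [hr n]⟩
  rw [sub_self, abs_zero, mul_zero, zero_div] at hcenter
  exact norm_le_zero_iff.1 ((hω _).trans_eq hcenter)
end

section
/- (Contagious smallness lemma) There is an absolute constant C > 0 such that for every σ > 0 there exist α(σ) ∈ (0, 1/2) and h(σ) > 2 with the following property: for every h ≥ h(σ), every entire function f with |f(z)| ≤ e^{σ|z|} for all z ∈ ℂ and |f(x)| ≤ 1 for all x ∈ ℝ, and every compact interval I ⊂ ℝ, if |f(x)| ≤ e^{−h T_I(x)} for all x ∈ ℝ, then |f(x)| ≤ e^{−C h |I|} for all x in the interval Ĩ centered at the center of I with length |Ĩ| = √(h^{2α(σ)} − 1) · |I|. -/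
open MeasureTheory Filter Topology Complex Set

/-- The "solitary tooth" based on the interval `[a,b]`: `T_{[a,b]}(x) = dist(x, ℝ \ [a,b])`,
which equals `max (min (x - a) (b - x)) 0`. -/
noncomputable def tooth (a b x : ℝ) : ℝ := max (min (x - a) (b - x)) 0

/-- Membership in the class `𝓔_{σ,1}`: `f` is entire, `|f(z)| ≤ e^{σ|z|}` on `ℂ` and
`|f| ≤ 1` on `ℝ`. -/
def MemE (σ : ℝ) (f : ℂ → ℂ) : Prop :=
  Differentiable ℂ f ∧ (∀ z : ℂ, ‖f z‖ ≤ Real.exp (σ * ‖z‖)) ∧ ∀ x : ℝ, ‖f (x : ℂ)‖ ≤ 1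

/-!
The map `z ↦ c + r cosh z` sends the line `Re z = 0` onto `[c - r, c + r]`, where the tooth
hypothesis gives `|f| ≤ e^{-h r}`, and the strip `0 ≤ Re z ≤ L` into the band `|Im| ≤ r e^L`,
where Phragmén–Lindelöf gives `|f| ≤ e^{σ r e^L}` for `f ∈ 𝓔_{σ,1}`. A real point `x` with
`|x - c| = r cosh t` lies on the image of `Re z = t`, so the three lines theorem yields
`log |f x| ≤ -(1 - t/L) h r + (t/L) σ r e^L`. With `r = |I|/4`, `α = 1/8` and `e^L = 256 √h`,
every `x ∈ Ĩ` with `|x - c| > r` has `e^t ≤ 2|x - c|/r ≤ 4 h^{1/8} = e^{L/4}`, and `h ≥ (512σ + 2)²`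
makes `σ e^L ≤ h/2`; this gives `|f x| ≤ e^{-h|I|/8}`.
-/

theorem Complex.norm_cosh_le_exp_abs_re (w : ℂ) : ‖cosh w‖ ≤ Real.exp |w.re| := by
  calc ‖cosh w‖ = ‖exp w + exp (-w)‖ / 2 := by simp [Complex.cosh]
    _ ≤ (‖exp w‖ + ‖exp (-w)‖) / 2 := by gcongr; exact norm_add_le _ _
    _ = (Real.exp w.re + Real.exp (-w.re)) / 2 := by simp [Complex.norm_exp]
    _ ≤ Real.exp |w.re| := by
      have := Real.exp_le_exp.2 (le_abs_self w.re)
      have := Real.exp_le_exp.2 (neg_le_abs w.re)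
      linarith

theorem norm_le_exp_mul_im_of_nonneg_im {σ : ℝ} {f : ℂ → ℂ} (hd : Differentiable ℂ f)
    (hgrowth : ∀ z, ‖f z‖ ≤ Real.exp (σ * ‖z‖)) (hreal : ∀ x : ℝ, ‖f x‖ ≤ 1) {z : ℂ}
    (hz : 0 ≤ z.im) : ‖f z‖ ≤ Real.exp (σ * z.im) := by
  set F : ℂ → ℂ := fun w => exp (-σ * w) * f (I * w)
  have hnormF : ∀ w, ‖F w‖ = Real.exp (-σ * w.re) * ‖f (I * w)‖ := fun w => by
    simp [F, Complex.norm_exp]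
  have hF : ‖F (-I * z)‖ ≤ 1 := by
    refine PhragmenLindelof.right_half_plane_of_bounded_on_real
      ((differentiable_exp.comp (differentiable_id.const_mul _)).mul
        (hd.comp (differentiable_id.const_mul _))).diffContOnCl
      ⟨1, one_lt_two, 2 * |σ|, Asymptotics.IsBigO.of_bound 1 (Eventually.of_forall fun w => ?_)⟩
      (isBoundedUnder_of_eventually_le (a := 1) ?_) (fun x => ?_) (by simpa using hz)
    · have hre : -σ * w.re ≤ |σ| * ‖w‖ :=
        calc -σ * w.re ≤ |-σ * w.re| := le_abs_self _
          _ = |σ| * |w.re| := by rw [abs_mul, abs_neg]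
          _ ≤ |σ| * ‖w‖ := by gcongr; exact abs_re_le_norm w
      rw [hnormF, Real.norm_of_nonneg (Real.exp_pos _).le, Real.rpow_one, one_mul]
      calc Real.exp (-σ * w.re) * ‖f (I * w)‖
          ≤ Real.exp (|σ| * ‖w‖) * Real.exp (σ * ‖w‖) :=
            mul_le_mul (Real.exp_le_exp.2 hre) (by simpa using hgrowth (I * w))
              (norm_nonneg _) (Real.exp_pos _).le
        _ ≤ Real.exp (2 * |σ| * ‖w‖) := by
            rw [← Real.exp_add]; gcongr
            nlinarith [le_abs_self σ, norm_nonneg w]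
    · filter_upwards [eventually_ge_atTop 0] with x hx
      rw [hnormF]
      calc Real.exp (-σ * x) * ‖f (I * x)‖ ≤ Real.exp (-σ * x) * Real.exp (σ * x) := by
            gcongr; simpa [abs_of_nonneg hx] using hgrowth (I * x)
        _ = 1 := by rw [← Real.exp_add]; simp
    · rw [hnormF]
      simpa [mul_comm I, mul_assoc] using hreal (-x)
  have hIz : I * (-I * z) = z := by ring_nf; simp
  rw [hnormF, hIz, mul_comm, ← le_div_iff₀ (Real.exp_pos _)] at hF
  simpa [Real.exp_neg] using hF

theorem MemE.norm_le_exp_mul_abs_im {σ : ℝ} {f : ℂ → ℂ} (hf : MemE σ f) (z : ℂ) :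
    ‖f z‖ ≤ Real.exp (σ * |z.im|) := by
  obtain ⟨hd, hgrowth, hreal⟩ := hf
  rcases le_total 0 z.im with hz | hz
  · simpa [abs_of_nonneg hz] using norm_le_exp_mul_im_of_nonneg_im hd hgrowth hreal hz
  · have := norm_le_exp_mul_im_of_nonneg_im (f := fun w => f (-w)) (z := -z)
      (hd.comp differentiable_neg) (fun w => by simpa using hgrowth (-w))
      (fun x => by simpa using hreal (-x)) (by simpa using hz)
    simpa [abs_of_nonpos hz] using this

theorem norm_apply_add_mul_cosh_le {σ c r A L : ℝ} {f : ℂ → ℂ} (hd : Differentiable ℂ f)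
    (hσ : 0 ≤ σ) (hgrowth : ∀ z, ‖f z‖ ≤ Real.exp (σ * |z.im|)) (hr : 0 ≤ r) (hL : 0 < L)
    (hsmall : ∀ y : ℝ, |y - c| ≤ r → ‖f y‖ ≤ Real.exp (-A)) {w : ℂ} (hw : w.re ∈ Icc 0 L) :
    ‖f (c + r * cosh w)‖ ≤ Real.exp (-(1 - w.re / L) * A + w.re / L * (σ * r * Real.exp L)) := by
  set g : ℂ → ℂ := fun z => f (c + r * cosh (L * z))
  have hg : Differentiable ℂ g :=
    hd.comp ((differentiable_const _).add ((differentiable_const _).mul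
      (differentiable_cosh.comp (differentiable_id.const_mul _))))
  have hbound : ∀ z : ℂ, z.re ∈ Icc (0 : ℝ) 1 → ‖g z‖ ≤ Real.exp (σ * r * Real.exp L) := by
    intro z hz
    have him : |(cosh (L * z)).im| ≤ Real.exp L :=
      calc |(cosh (L * z)).im| ≤ ‖cosh (L * z)‖ := abs_im_le_norm _
        _ ≤ Real.exp |(L * z).re| := norm_cosh_le_exp_abs_re _
        _ ≤ Real.exp L := by
          rw [re_ofReal_mul, abs_mul, abs_of_nonneg hL.le, abs_of_nonneg hz.1]
          gcongr; exact mul_le_of_le_one_right hL.le hz.2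
    refine (hgrowth _).trans (Real.exp_le_exp.2 ?_)
    rw [mul_assoc]
    gcongr
    simpa [abs_mul, abs_of_nonneg hr] using mul_le_mul_of_nonneg_left him hr
  have hleft : ∀ z ∈ re ⁻¹' {0}, ‖g z‖ ≤ Real.exp (-A) := by
    intro z hz
    have hz : z = z.im * I := by simpa [Complex.ext_iff] using hz
    have : g z = f (c + r * Real.cos (L * z.im) : ℝ) := by
      simp only [g]; rw [hz, ← mul_assoc, ← ofReal_mul, cosh_mul_I]; push_cast; simp
    rw [this]
    refine hsmall _ ?_
    simpa [abs_mul, abs_of_nonneg hr] using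
      mul_le_of_le_one_right hr (Real.abs_cos_le_one (L * z.im))
  have hre : (w / L).re = w.re / L := div_ofReal_re w L
  have hz : w / L ∈ HadamardThreeLines.verticalClosedStrip 0 1 := by
    rw [HadamardThreeLines.verticalClosedStrip, mem_preimage, hre]
    exact ⟨div_nonneg hw.1 hL.le, div_le_one_of_le₀ hw.2 hL.le⟩
  have := HadamardThreeLines.norm_le_interp_of_mem_verticalClosedStrip₀₁' g hz hg.diffContOnCl
    ⟨_, Set.forall_mem_image.2 fun z hz => hbound z hz⟩ hleft
    (fun z hz => hbound z (by simp_all))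
  rw [hre, ← Real.exp_mul, ← Real.exp_mul, ← Real.exp_add] at this
  have hgw : g (w / L) = f (c + r * cosh w) := by
    simp only [g, mul_div_cancel₀ w (ofReal_ne_zero.2 hL.ne')]
  rw [hgw] at this
  convert this using 2
  ring

theorem Real.exp_arcosh_le {x : ℝ} (hx : 1 ≤ x) : Real.exp (Real.arcosh x) ≤ 2 * x := by
  have : √(x ^ 2 - 1) ≤ x := Real.sqrt_le_iff.2 ⟨by linarith, by linarith⟩
  rw [Real.exp_arcosh hx]; linarith

theorem Complex.exists_cosh_eq_of_one_le_abs {x : ℝ} (hx : 1 ≤ |x|) :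
    ∃ w : ℂ, w.re = Real.arcosh |x| ∧ cosh w = x := by
  rcases le_total 0 x with h | h
  · refine ⟨Real.arcosh |x|, ofReal_re _, ?_⟩
    rw [← ofReal_cosh, Real.cosh_arcosh hx, abs_of_nonneg h]
  · refine ⟨Real.arcosh |x| + Real.pi * I, by simp, ?_⟩
    rw [cosh_add_pi_mul_I, ← ofReal_cosh, Real.cosh_arcosh hx, abs_of_nonpos h]
    push_cast; ring

theorem le_tooth_of_abs_sub_le {a b x t : ℝ} (h : |x - (a + b) / 2| + t ≤ (b - a) / 2) :
    t ≤ tooth a b x := by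
  have := abs_le.1 (le_sub_iff_add_le.2 h)
  exact le_max_of_le_left (le_min (by linarith) (by linarith))

theorem MemE.norm_le_of_small_near_center {σ c r ρ A L x : ℝ} {f : ℂ → ℂ} (hf : MemE σ f)
    (hσ : 0 ≤ σ) (hr : 0 ≤ r) (hA : 0 ≤ A)
    (hsmall : ∀ y : ℝ, |y - c| ≤ r → ‖f y‖ ≤ Real.exp (-A)) (hx : |x - c| ≤ ρ * r)
    (hρ : 2 * ρ ≤ Real.exp (L / 4)) (hL : 2 * σ * r * Real.exp L ≤ A) :
    ‖f x‖ ≤ Real.exp (-A / 2) := by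
  rcases le_or_gt |x - c| r with hnear | hfar
  · exact (hsmall x hnear).trans (Real.exp_le_exp.2 (by linarith))
  have hr0 : 0 < r := by
    by_contra! h0
    rw [le_antisymm h0 hr, mul_zero] at hx
    linarith
  set u := |x - c| / r
  have hu1 : 1 < u := (one_lt_div hr0).2 hfar
  obtain ⟨w, hwre, hw⟩ := Complex.exists_cosh_eq_of_one_le_abs (x := (x - c) / r)
    (by rw [abs_div, abs_of_pos hr0]; exact hu1.le)
  rw [abs_div, abs_of_pos hr0] at hwre
  have ht : 4 * Real.arcosh u ≤ L := by
    have : Real.exp (Real.arcosh u) ≤ Real.exp (L / 4) := by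
      linarith [Real.exp_arcosh_le hu1.le, (div_le_iff₀ hr0).2 hx]
    linarith [Real.exp_le_exp.1 this]
  have ht0 : 0 < Real.arcosh u := Real.arcosh_pos hu1
  have hL0 : 0 < L := by linarith
  have hxw : (c : ℂ) + r * cosh w = x := by
    rw [hw, ← ofReal_mul, ← ofReal_add, mul_div_cancel₀ _ hr0.ne', add_sub_cancel]
  have key := norm_apply_add_mul_cosh_le hf.1 hσ hf.norm_le_exp_mul_abs_im hr hL0 hsmall
    (w := w) ⟨by linarith, by linarith⟩
  rw [hxw] at key
  refine key.trans (Real.exp_le_exp.2 ?_)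
  have hs0 : 0 ≤ w.re / L := by rw [hwre]; positivity
  have hs : w.re / L ≤ 1 / 4 := by rw [hwre, div_le_iff₀ hL0]; linarith
  nlinarith [mul_le_mul_of_nonneg_left hL hs0, mul_le_mul_of_nonneg_right hs hA]

/-- **Contagious smallness lemma.** There is an absolute constant `C > 0` such that for every
`σ > 0` there exist `α(σ) ∈ (0, 1/2)` and `h(σ) > 2` with: for every `h ≥ h(σ)`, every
`f ∈ 𝓔_{σ,1}` and every compact interval `I = [a,b]`, if `|f| ≤ e^{-h T_I}` on `ℝ`, then
`|f| ≤ e^{-C h |I|}` on the interval `Ĩ` centered at the center of `I` with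
`|Ĩ| = √(h^{2α(σ)} - 1) |I|`. -/
theorem contagious_smallness :
    ∃ C : ℝ, 0 < C ∧ ∀ σ : ℝ, 0 < σ →
      ∃ α : ℝ, α ∈ Set.Ioo (0 : ℝ) (1 / 2) ∧ ∃ h₀ : ℝ, 2 < h₀ ∧
        ∀ h : ℝ, h₀ ≤ h → ∀ f : ℂ → ℂ, MemE σ f →
          ∀ a b : ℝ, a ≤ b →
            (∀ x : ℝ, ‖f (x : ℂ)‖ ≤ Real.exp (-(h * tooth a b x))) →
            ∀ x : ℝ, |x - (a + b) / 2| ≤ Real.sqrt (h ^ (2 * α) - 1) * (b - a) / 2 →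
              ‖f (x : ℂ)‖ ≤ Real.exp (-(C * h * (b - a))) := by
  refine ⟨1 / 8, by norm_num, fun σ hσ => ⟨1 / 8, by norm_num, (512 * σ + 2) ^ 2, by nlinarith, ?_⟩⟩
  intro h hh f hf a b hab hsmall x hx
  have hh0 : 0 < h := by nlinarith
  set q := h ^ (1 / 8 : ℝ)
  have hq0 : 0 < q := by positivity
  have hq_pow : ∀ n : ℕ, q ^ n = h ^ (n / 8 : ℝ) := fun n => by
    rw [← Real.rpow_natCast, ← Real.rpow_mul hh0.le]; ring_nf
  have hσq : 512 * σ + 2 ≤ q ^ 4 :=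
    (sq_le_sq₀ (by positivity) (by positivity)).1 (by rw [← pow_mul, hq_pow]; norm_num; exact hh)
  have hcenter : ∀ y : ℝ, |y - (a + b) / 2| ≤ (b - a) / 4 →
      ‖f y‖ ≤ Real.exp (-(h * ((b - a) / 4))) := fun y hy =>
    (hsmall y).trans (Real.exp_le_exp.2 (neg_le_neg (mul_le_mul_of_nonneg_left
      (le_tooth_of_abs_sub_le (by linarith)) hh0.le)))
  have hxq : |x - (a + b) / 2| ≤ 2 * q * ((b - a) / 4) := by
    have : √(h ^ (2 * (1 / 8 : ℝ)) - 1) ≤ q := by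
      refine Real.sqrt_le_iff.2 ⟨hq0.le, ?_⟩
      rw [hq_pow]; norm_num
    nlinarith [mul_le_mul_of_nonneg_right this (sub_nonneg.2 hab)]
  have hexpL : Real.exp (4 * Real.log (4 * q)) = 256 * q ^ 4 := by
    rw [← Real.log_rpow (by positivity), Real.exp_log (by positivity)]; norm_num; ring
  have hL : 2 * σ * ((b - a) / 4) * Real.exp (4 * Real.log (4 * q)) ≤ h * ((b - a) / 4) := by
    rw [hexpL, show h = q ^ 4 * q ^ 4 by rw [← pow_add, hq_pow]; norm_num]
    nlinarith [mul_le_mul_of_nonneg_left hσq (mul_nonneg (sub_nonneg.2 hab) (pow_nonneg hq0.le 4))]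
  have := hf.norm_le_of_small_near_center hσ.le (by linarith) (by positivity) hcenter hxq
    (by rw [mul_div_cancel_left₀ _ four_ne_zero, Real.exp_log (by positivity)]; linarith) hL
  convert this using 2; ring
end
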